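/- Let k ≥ 2 be an integer and i an integer with 0 ≤ i ≤ 2k, and let F(z) = φ^{4k−2i}(z) φ^{2i}(3z). Then the limit as Im(z) → ∞ of (3z+1)^{−2k} F(z/(3z+1)) equals (−1)^{i+k}/2^{2k}. That is, the first term of the Fourier series expansion of F at the cusp 1/3 is (−3z−1)^{2k} · (−1)^{i+k}/2^{2k}. -/

import Mathlib

/-!
Put `τ = 3z + 1`, so that `z / (3z + 1) = 1/3 - 1/(3τ)` and `3z / (3z + 1) = 1 - 1/τ`.
Splitting the series of `φ` according to `n mod 3` gives `φ(1/3 + v) = (1 - ω) φ(9v) + ω φ(v)`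
with `ω = e^{2πi/3}`, and since `φ(z) = θ(2z)`, the inversion `θ(-1/σ) = (-iσ)^{1/2} θ(σ)` turns
`φ(z / (3z + 1))²` into `(-iτ/6) C(τ)²` with `C(τ) = (1 - ω) θ(τ/6) + 3ω θ(3τ/2)`, and
`φ(3z / (3z + 1))²` into `(-iτ/2) θ(τ/2)²`. The powers of `-iτ` cancel `τ^{-2k}` up to `(-1)^k`,
and as `Im τ → ∞` every `θ` tends to `1`, so `C(τ)² → (1 + 2ω)² = -3`.
-/

open Complex UpperHalfPlane Filter

/-- Ramanujan's theta function `φ(z) = ∑_{n ∈ ℤ} q^{n²}`. -/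
noncomputable def phi (z : ℂ) : ℂ :=
  ∑' n : ℤ, Complex.exp (2 * Real.pi * Complex.I * (n : ℂ) ^ 2 * z)

open scoped Real Topology

local notation "ω" => cexp (2 * π * Complex.I / 3)

theorem ofReal_mul_cpow {r : ℝ} (hr : 0 ≤ r) (x s : ℂ) :
    ((r : ℂ) * x) ^ s = (r : ℂ) ^ s * x ^ s := by
  rcases eq_or_ne s 0 with rfl | hs
  · simp
  rcases hr.eq_or_lt with rfl | hr
  · simp [zero_cpow hs]
  rcases eq_or_ne x 0 with rfl | hx
  · simp [zero_cpow hs]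
  have hr' : (r : ℂ) ≠ 0 := ofReal_ne_zero.mpr hr.ne'
  rw [cpow_def_of_ne_zero (mul_ne_zero hr' hx), log_ofReal_mul hr hx, ofReal_log hr.le,
    add_mul, exp_add, ← cpow_def_of_ne_zero hr', ← cpow_def_of_ne_zero hx]

theorem nine_mul_cpow_one_half (x : ℂ) : (9 * x) ^ (1 / 2 : ℂ) = 3 * x ^ (1 / 2 : ℂ) := by
  have h9 : (9 : ℂ) ^ (1 / 2 : ℂ) = 3 := by
    rw [show (9 : ℂ) = 3 ^ 2 by norm_num, one_div, sq_cpow_two_inv (by norm_num)]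
  have := ofReal_mul_cpow (r := 9) (by norm_num) x (1 / 2)
  push_cast at this
  rw [this, h9]

theorem cpow_one_half_sq (x : ℂ) : (x ^ (1 / 2 : ℂ)) ^ 2 = x := by
  rw [one_div, cpow_ofNat_inv_pow]

theorem jacobiTheta_neg_inv {σ : ℂ} (hσ : σ ≠ 0) :
    jacobiTheta (-σ⁻¹) = (-Complex.I * σ) ^ (1 / 2 : ℂ) * jacobiTheta σ := by
  have hroot : (-Complex.I * σ) ^ (1 / 2 : ℂ) ≠ 0 := by
    simp [cpow_eq_zero_iff, hσ, I_ne_zero]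
  have h := jacobiTheta₂_functional_equation 0 σ
  simp only [zero_pow two_ne_zero, mul_zero, zero_div, Complex.exp_zero, mul_one,
    ← jacobiTheta_eq_jacobiTheta₂, neg_div, one_div] at h
  rw [h, one_div, mul_inv_cancel_left₀ (by rwa [one_div] at hroot)]

theorem phi_eq_jacobiTheta (z : ℂ) : phi z = jacobiTheta (2 * z) :=
  tsum_congr fun n => by ring_nf

theorem hasSum_phi {z : ℂ} (hz : 0 < z.im) :
    HasSum (fun n : ℤ => cexp (2 * π * Complex.I * n ^ 2 * z)) (phi z) := by
  rw [phi_eq_jacobiTheta, jacobiTheta_eq_jacobiTheta₂]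
  convert hasSum_jacobiTheta₂_term 0 (by simpa using hz : 0 < (2 * z).im) using 2 with n
  simp only [jacobiTheta₂_term]
  ring_nf

theorem phi_one_add (z : ℂ) : phi (1 + z) = phi z := by
  rw [phi_eq_jacobiTheta, phi_eq_jacobiTheta, mul_one_add, jacobiTheta_two_add]

theorem phi_neg_inv_two_mul {σ : ℂ} (hσ : σ ≠ 0) :
    phi (-(2 * σ)⁻¹) = (-Complex.I * σ) ^ (1 / 2 : ℂ) * jacobiTheta σ := by
  rw [phi_eq_jacobiTheta, mul_neg, mul_inv, mul_inv_cancel_left₀ two_ne_zero,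
    jacobiTheta_neg_inv hσ]

theorem Int.sq_emod_three (n : ℤ) : n ^ 2 % 3 = if 3 ∣ n then 0 else 1 := by
  rw [sq, Int.mul_emod]
  simp only [Int.dvd_iff_emod_eq_zero]
  have h0 := Int.emod_nonneg n (by norm_num : (3 : ℤ) ≠ 0)
  have h3 := Int.emod_lt_of_pos n (by norm_num : (0 : ℤ) < 3)
  interval_cases n % 3 <;> simp

theorem cexp_two_pi_I_mul_sq_div_three (n : ℤ) :
    cexp (2 * π * Complex.I * n ^ 2 / 3) = if 3 ∣ n then 1 else ω := by
  obtain ⟨q, hq⟩ : ∃ q : ℤ, n ^ 2 = 3 * q + n ^ 2 % 3 :=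
    ⟨n ^ 2 / 3, (Int.mul_ediv_add_emod _ 3).symm⟩
  have hn : (n : ℂ) ^ 2 = 3 * q + ((n ^ 2 % 3 : ℤ) : ℂ) := by exact_mod_cast hq
  rw [hn, mul_add, add_div, show 2 * π * Complex.I * (3 * q) / 3 = q * (2 * π * Complex.I) by ring,
    exp_add, exp_int_mul_two_pi_mul_I, one_mul, Int.sq_emod_three]
  split_ifs <;> simp

theorem phi_one_third_add {v : ℂ} (hv : 0 < v.im) :
    phi (1 / 3 + v) = (1 - ω) * phi (9 * v) + ω * phi v := by
  set t : ℤ → ℂ := fun n => cexp (2 * π * Complex.I * n ^ 2 * v)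
  have hmultiples : HasSum ((Set.range (3 * ·)).indicator t) (phi (9 * v)) := by
    refine hasSum_subtype_iff_indicator.mp
      ((mul_right_injective₀ (three_ne_zero (α := ℤ))).hasSum_range_iff.mpr ?_)
    convert hasSum_phi (by simpa using hv : 0 < (9 * v).im) using 2 with m
    simp only [t, Function.comp_apply]
    push_cast
    ring_nf
  refine (((hmultiples.mul_left (1 - ω)).add ((hasSum_phi hv).mul_left ω)).congr_fun
    fun n => ?_).tsum_eq
  have hsplit : cexp (2 * π * Complex.I * n ^ 2 * (1 / 3 + v))
      = cexp (2 * π * Complex.I * n ^ 2 / 3) * t n := by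
    rw [← exp_add]; ring_nf
  by_cases h3 : (3 : ℤ) ∣ n
  · rw [Set.indicator_of_mem (by obtain ⟨m, rfl⟩ := h3; exact ⟨m, rfl⟩), hsplit,
      cexp_two_pi_I_mul_sq_div_three, if_pos h3]
    ring
  · rw [Set.indicator_of_notMem (by rintro ⟨m, rfl⟩; exact h3 ⟨m, rfl⟩), hsplit,
      cexp_two_pi_I_mul_sq_div_three, if_neg h3]
    ring

noncomputable def cuspThirdTheta (τ : ℂ) : ℂ :=
  (1 - ω) * jacobiTheta (τ / 6) + 3 * ω * jacobiTheta (3 * τ / 2)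

theorem phi_one_third_sub_inv {τ : ℂ} (hτ : 0 < τ.im) :
    phi (1 / 3 - (3 * τ)⁻¹) = (-Complex.I * (τ / 6)) ^ (1 / 2 : ℂ) * cuspThirdTheta τ := by
  have hτ0 : τ ≠ 0 := by rintro rfl; simp at hτ
  have hv : 0 < (-(3 * τ)⁻¹).im := by
    simpa [Complex.inv_im, neg_div] using div_pos hτ (normSq_pos.2 hτ0)
  rw [sub_eq_add_neg, phi_one_third_add hv,
    show 9 * -(3 * τ)⁻¹ = -(2 * (τ / 6))⁻¹ by field_simp; ring,
    show -(3 * τ)⁻¹ = -(2 * (3 * τ / 2))⁻¹ by field_simp,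
    phi_neg_inv_two_mul (by simpa using hτ0), phi_neg_inv_two_mul (by simpa using hτ0),
    show -Complex.I * (3 * τ / 2) = 9 * (-Complex.I * (τ / 6)) by ring,
    nine_mul_cpow_one_half, cuspThirdTheta]
  ring

theorem phi_one_sub_inv {τ : ℂ} (hτ : τ ≠ 0) :
    phi (1 - τ⁻¹) = (-Complex.I * (τ / 2)) ^ (1 / 2 : ℂ) * jacobiTheta (τ / 2) := by
  rw [sub_eq_add_neg, phi_one_add, show -τ⁻¹ = -(2 * (τ / 2))⁻¹ by field_simp,
    phi_neg_inv_two_mul (by simpa using hτ)]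

theorem tendsto_jacobiTheta_of_tendsto_im {α : Type*} {l : Filter α} {f : α → ℂ}
    (hf : Tendsto (fun a => (f a).im) l atTop) :
    Tendsto (fun a => jacobiTheta (f a)) l (𝓝 1) := by
  have hexp : Tendsto (fun τ : ℂ => Real.exp (-π * τ.im)) (comap im atTop) (𝓝 0) :=
    Real.tendsto_exp_atBot.comp <|
      tendsto_comap.const_mul_atTop_of_neg (by simpa using Real.pi_pos)
  have hθ : Tendsto jacobiTheta (comap im atTop) (𝓝 1) := by
    simpa using (isBigO_at_im_infty_jacobiTheta_sub_one.trans_tendsto hexp).add_const 1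
  exact hθ.comp (tendsto_comap_iff.2 hf)

theorem tendsto_im_three_mul_add_one :
    Tendsto (fun z : ℍ => 3 * (z : ℂ) + 1) atImInfty (comap im atTop) :=
  tendsto_comap_iff.2 <| by
    have him : Tendsto UpperHalfPlane.im atImInfty atTop := tendsto_comap
    simpa [Function.comp_def] using him.const_mul_atTop (by norm_num : (0 : ℝ) < 3)

theorem one_add_two_mul_cexp_sq : (1 + 2 * ω) ^ 2 = -3 := by
  have h := (isPrimitiveRoot_exp 3 (by norm_num)).geom_sum_eq_zero (by norm_num)
  simp only [Finset.sum_range_succ, Finset.sum_range_zero, Nat.cast_ofNat] at h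
  linear_combination 4 * h

theorem tendsto_cuspThirdTheta :
    Tendsto cuspThirdTheta (comap im atTop) (𝓝 (1 + 2 * ω)) := by
  have h6 : Tendsto (fun τ : ℂ => jacobiTheta (τ / 6)) (comap im atTop) (𝓝 1) :=
    tendsto_jacobiTheta_of_tendsto_im <| by
      simpa using tendsto_comap.atTop_div_const (by norm_num : (0 : ℝ) < 6)
  have h32 : Tendsto (fun τ : ℂ => jacobiTheta (3 * τ / 2)) (comap im atTop) (𝓝 1) :=
    tendsto_jacobiTheta_of_tendsto_im <| by
      simpa using (tendsto_comap.const_mul_atTop (by norm_num : (0 : ℝ) < 3)).atTop_div_const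
        (by norm_num : (0 : ℝ) < 2)
  have h := (h6.const_mul (1 - ω)).add (h32.const_mul (3 * ω))
  rw [mul_one, mul_one, show 1 - ω + 3 * ω = 1 + 2 * ω by ring] at h
  exact h

theorem inv_pow_mul_neg_I_mul_pow {τ : ℂ} (hτ : τ ≠ 0) (a b : ℂ) {i j k : ℕ}
    (h : j + i = 2 * k) :
    (τ ^ (2 * k))⁻¹ * ((-Complex.I * τ * a) ^ j * (-Complex.I * τ * b) ^ i)
      = (-1) ^ k * a ^ j * b ^ i := by
  have hI : (-Complex.I * τ) ^ (2 * k) = (-1) ^ k * τ ^ (2 * k) := by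
    rw [mul_pow, pow_mul, neg_sq, I_sq]
  calc _ = (τ ^ (2 * k))⁻¹ * (-Complex.I * τ) ^ (j + i) * a ^ j * b ^ i := by ring
    _ = _ := by rw [h, hI]; field_simp

theorem neg_one_pow_mul_neg_half_pow_mul_half_pow {i j k : ℕ} (h : j + i = 2 * k) :
    (-1 : ℂ) ^ k * (-1 / 2) ^ j * (1 / 2) ^ i = (-1) ^ (i + k) / 2 ^ (2 * k) := by
  have hsign : (-1 : ℂ) ^ (i + k) = (-1) ^ k * (-1) ^ j := by
    rw [← pow_add, neg_one_pow_eq_pow_mod_two, neg_one_pow_eq_pow_mod_two (n := k + j)]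
    congr 1
    omega
  rw [hsign, ← h, div_pow, div_pow, pow_add]
  ring

theorem phi_cusp_third_expansion {z : ℂ} (hz : 0 < z.im) {i j k : ℕ} (h : j + i = 2 * k) :
    ((3 * z + 1) ^ (2 * k))⁻¹ *
        (phi (z / (3 * z + 1)) ^ (2 * j) * phi (3 * (z / (3 * z + 1))) ^ (2 * i))
      = (-1) ^ k * (cuspThirdTheta (3 * z + 1) ^ 2 / 6) ^ j *
          (jacobiTheta ((3 * z + 1) / 2) ^ 2 / 2) ^ i := by
  set τ := 3 * z + 1 with hτ_def
  have hτ : 0 < τ.im := by simpa [hτ_def] using hz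
  have hτ0 : τ ≠ 0 := by rintro h; simp [h] at hτ
  have hw : z / τ = 1 / 3 - (3 * τ)⁻¹ := by
    rw [← one_div, div_sub_div _ _ three_ne_zero (mul_ne_zero three_ne_zero hτ0),
      div_eq_div_iff hτ0 (mul_ne_zero three_ne_zero (mul_ne_zero three_ne_zero hτ0))]
    ring
  have h3w : 3 * (z / τ) = 1 - τ⁻¹ := by
    rw [hw, mul_sub, mul_one_div_cancel three_ne_zero, mul_inv,
      mul_inv_cancel_left₀ three_ne_zero]
  rw [h3w, hw, pow_mul _ 2 j, pow_mul _ 2 i, phi_one_third_sub_inv hτ, phi_one_sub_inv hτ0,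
    mul_pow _ (cuspThirdTheta τ), mul_pow _ (jacobiTheta _), cpow_one_half_sq, cpow_one_half_sq,
    ← inv_pow_mul_neg_I_mul_pow hτ0 _ _ h]
  ring_nf

theorem phi_pow_first_term_at_cusp_13_general (k i : ℕ) (hi : i ≤ 2 * k) :
    Filter.Tendsto (fun z : UpperHalfPlane =>
        (((3 : ℂ) * (z : ℂ) + 1) ^ (2 * k))⁻¹ *
          (phi ((z : ℂ) / ((3 : ℂ) * (z : ℂ) + 1)) ^ (4 * k - 2 * i) *
            phi (3 * ((z : ℂ) / ((3 : ℂ) * (z : ℂ) + 1))) ^ (2 * i)))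
      UpperHalfPlane.atImInfty
      (nhds ((-1 : ℂ) ^ (i + k) / 2 ^ (2 * k))) := by
  obtain ⟨j, hj⟩ : ∃ j, j + i = 2 * k := ⟨2 * k - i, by omega⟩
  have hθ : Tendsto (fun τ : ℂ => jacobiTheta (τ / 2)) (comap im atTop) (𝓝 1) :=
    tendsto_jacobiTheta_of_tendsto_im (by simpa using tendsto_comap.atTop_div_const two_pos)
  have hlim := ((((tendsto_cuspThirdTheta.pow 2).div_const 6).pow j).const_mul
    ((-1 : ℂ) ^ k)).mul (((hθ.pow 2).div_const 2).pow i)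
  rw [one_add_two_mul_cexp_sq, one_pow] at hlim
  rw [← neg_one_pow_mul_neg_half_pow_mul_half_pow hj]
  convert hlim.comp tendsto_im_three_mul_add_one using 2 with z
  · rw [show 4 * k - 2 * i = 2 * j by omega, Function.comp_apply,
      phi_cusp_third_expansion (by simpa using z.im_pos) hj]
  · norm_num

/-- The first term of the Fourier expansion of `F(z) = φ^{4k−2i}(z) φ^{2i}(3z)` at the
cusp `1/3`. -/
theorem phi_pow_first_term_at_cusp_13 (k i : ℕ) (hk : 2 ≤ k) (hi : i ≤ 2 * k) :
    Filter.Tendsto (fun z : UpperHalfPlane =>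
        (((3 : ℂ) * (z : ℂ) + 1) ^ (2 * k))⁻¹ *
          (phi ((z : ℂ) / ((3 : ℂ) * (z : ℂ) + 1)) ^ (4 * k - 2 * i) *
            phi (3 * ((z : ℂ) / ((3 : ℂ) * (z : ℂ) + 1))) ^ (2 * i)))
      UpperHalfPlane.atImInfty
      (nhds ((-1 : ℂ) ^ (i + k) / 2 ^ (2 * k))) :=
  phi_pow_first_term_at_cusp_13_general k i hi
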